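/- As n → ∞, G(n) := (1/n) ∑_{ℓ=1}^{n−1} 1/sin(πℓ/n) satisfies G(n) = (2/π)(log(n) + γ + log(2/π)) + o(1), where γ is the Euler–Mascheroni constant. -/

import Mathlib

/-!
Split `1 / sin x = 1 / x + 1 / (π - x) + F x` with `F` continuous on `[0, π]`. At the nodes `πℓ/n`
the two poles contribute `(2/π) H_{n-1} = (2/π)(log n + γ) + o(1)` to `G n`, while the rest is a
Riemann sum of `F / π`. A primitive of `F` on `(0, π)` is `log (tan (x/2) (π - x) / x)`, with
limits `log (π/2)` at `0` and `-log (π/2)` at `π`, so `∫₀^π F = 2 log (2/π)`.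
-/

open Real Filter Topology Set MeasureTheory

noncomputable def G (n : ℕ) : ℝ := (1 / (n : ℝ)) * ∑ ℓ ∈ Finset.Icc 1 (n - 1), 1 / Real.sin (π * ℓ / n)

section RiemannSum

variable {f : ℝ → ℝ} {a b : ℝ}

noncomputable def leftRiemannSum (f : ℝ → ℝ) (a b : ℝ) (n : ℕ) : ℝ :=
  (b - a) / n * ∑ k ∈ Finset.range n, f (a + k * ((b - a) / n))

lemma abs_leftRiemannSum_sub_integral_le {ε : ℝ} {n : ℕ} (hab : a ≤ b)
    (hf : IntervalIntegrable f volume a b) (hn : n ≠ 0)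
    (hε : ∀ x ∈ Icc a b, ∀ y ∈ Icc a b, |x - y| ≤ (b - a) / n → |f x - f y| ≤ ε) :
    |leftRiemannSum f a b n - ∫ x in a..b, f x| ≤ (b - a) * ε := by
  set h := (b - a) / n with h_def
  set t : ℕ → ℝ := fun k => a + k * h
  have hh : 0 ≤ h := div_nonneg (sub_nonneg.2 hab) n.cast_nonneg
  have ht_mono : Monotone t := fun i j hij => by simp only [t]; gcongr
  have ht0 : t 0 = a := by simp [t]
  have htn : t n = b := by simp only [t, h]; field_simp; ring
  have hstep k : t (k + 1) - t k = h := by simp only [t]; push_cast; ring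
  have hcell k (hk : k < n) : Icc (t k) (t (k + 1)) ⊆ Icc a b :=
    Icc_subset_Icc (ht0 ▸ ht_mono (Nat.zero_le k)) (htn ▸ ht_mono hk)
  have hint k (hk : k < n) : IntervalIntegrable f volume (t k) (t (k + 1)) :=
    hf.mono_set <| by
      rw [uIcc_of_le hab, uIcc_of_le (ht_mono k.le_succ)]; exact hcell k hk
  have hcell_err k (hk : k < n) : |h * f (t k) - ∫ x in t k..t (k + 1), f x| ≤ ε * h := by
    rw [← hstep k, ← smul_eq_mul, ← intervalIntegral.integral_const,
      ← intervalIntegral.integral_sub intervalIntegrable_const (hint k hk),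
      ← abs_of_nonneg (sub_nonneg.2 (ht_mono k.le_succ))]
    refine intervalIntegral.norm_integral_le_of_norm_le_const (f := fun x => f (t k) - f x)
      fun x hx => ?_
    rw [uIoc_of_le (ht_mono k.le_succ)] at hx
    have hxk : x ∈ Icc (t k) (t (k + 1)) := Ioc_subset_Icc_self hx
    refine hε _ (hcell k hk ⟨le_rfl, ht_mono k.le_succ⟩) _ (hcell k hk hxk) ?_
    rw [abs_sub_comm, abs_of_nonneg (sub_nonneg.2 hxk.1), ← hstep k]
    linarith [hxk.2]
  calc |leftRiemannSum f a b n - ∫ x in a..b, f x|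
      = |∑ k ∈ Finset.range n, (h * f (t k) - ∫ x in t k..t (k + 1), f x)| := by
        rw [Finset.sum_sub_distrib, ← Finset.mul_sum,
          intervalIntegral.sum_integral_adjacent_intervals hint, ht0, htn]
        rfl
    _ ≤ ∑ k ∈ Finset.range n, ε * h :=
        (Finset.abs_sum_le_sum_abs _ _).trans
          (Finset.sum_le_sum fun k hk => hcell_err k (Finset.mem_range.1 hk))
    _ = (b - a) * ε := by
        rw [Finset.sum_const, Finset.card_range, nsmul_eq_mul, h_def]
        field_simp

lemma tendsto_leftRiemannSum (hab : a ≤ b) (hf : ContinuousOn f (Icc a b)) :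
    Tendsto (leftRiemannSum f a b) atTop (𝓝 (∫ x in a..b, f x)) := by
  rw [Metric.tendsto_nhds]
  intro ε hε
  have hε' : 0 < ε / (b - a + 1) := div_pos hε (by linarith)
  obtain ⟨δ, hδ, hfδ⟩ :=
    Metric.uniformContinuousOn_iff.1 (isCompact_Icc.uniformContinuousOn_of_continuous hf) _ hε'
  have hmesh : ∀ᶠ n : ℕ in atTop, (b - a) / n < δ :=
    (tendsto_const_div_atTop_nhds_zero_nat (b - a)).eventually (gt_mem_nhds hδ)
  filter_upwards [hmesh, eventually_ne_atTop 0] with n hn hn0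
  have hfI : IntervalIntegrable f volume a b :=
    (hf.mono (uIcc_of_le hab).subset).intervalIntegrable
  rw [Real.dist_eq]
  calc |leftRiemannSum f a b n - ∫ x in a..b, f x| ≤ (b - a) * (ε / (b - a + 1)) :=
        abs_leftRiemannSum_sub_integral_le hab hfI hn0 fun x hx y hy hxy =>
          (hfδ x hx y hy ((Real.dist_eq x y).trans_lt (hxy.trans_lt hn))).le
    _ < ε := by
        rw [mul_div_assoc', div_lt_iff₀ (by linarith)]
        nlinarith

end RiemannSum

lemma tendsto_const_sub_nhdsLT (a : ℝ) : Tendsto (a - ·) (𝓝[<] a) (𝓝[>] 0) := by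
  refine tendsto_nhdsWithin_of_tendsto_nhds_of_eventually_within _ ?_ ?_
  · simpa using ((continuous_sub_left a).tendsto a).mono_left nhdsWithin_le_nhds
  · filter_upwards [self_mem_nhdsWithin] with x hx using sub_pos.2 (mem_Iio.1 hx)

lemma abs_one_div_sin_sub_one_div_le {x : ℝ} (hx₀ : 0 < x) (hx : x ≤ π / 2) :
    |1 / sin x - 1 / x| ≤ π / 12 * x := by
  have hsin : 2 / π * x ≤ sin x := mul_le_sin hx₀.le hx
  have hsin₀ : 0 < sin x := lt_of_lt_of_le (by positivity) hsin
  have hcube : |x - sin x| ≤ x ^ 3 / 6 := by simpa [abs_of_pos hx₀] using abs_sub_sin_le x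
  rw [div_sub_div _ _ hsin₀.ne' hx₀.ne', one_mul, mul_one, abs_div,
    abs_of_pos (mul_pos hsin₀ hx₀), div_le_iff₀ (mul_pos hsin₀ hx₀)]
  calc |x - sin x| ≤ x ^ 3 / 6 := hcube
    _ = π / 12 * x * (2 / π * x * x) := by field_simp; ring
    _ ≤ π / 12 * x * (sin x * x) := by gcongr

lemma tendsto_one_div_sin_sub_one_div : Tendsto (fun x => 1 / sin x - 1 / x) (𝓝[>] 0) (𝓝 0) := by
  refine squeeze_zero_norm' ?_ (?_ : Tendsto (fun x => π / 12 * x) (𝓝[>] 0) (𝓝 0))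
  · filter_upwards [Ioc_mem_nhdsGT (by positivity : (0 : ℝ) < π / 2)] with x hx
    exact abs_one_div_sin_sub_one_div_le hx.1 hx.2
  · exact tendsto_nhdsWithin_of_tendsto_nhds
      (by simpa using (continuous_const_mul (π / 12)).tendsto 0)

lemma tendsto_tan_half_div_self : Tendsto (fun x => tan (x / 2) / x) (𝓝[≠] 0) (𝓝 (1 / 2)) := by
  have h := (hasDerivAt_tan (by simp : cos (0 / 2) ≠ 0)).comp (0 : ℝ)
    ((hasDerivAt_id (0 : ℝ)).div_const 2)
  rw [hasDerivAt_iff_tendsto_slope] at h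
  convert h using 2 <;> simp [slope_def_field]

-- The junk values `1 / 0 = 0` make `cscSubPoles 0 = cscSubPoles π = -1 / π`, which are the
-- limits at the endpoints.
noncomputable def cscSubPoles (x : ℝ) : ℝ := 1 / sin x - 1 / x - 1 / (π - x)

lemma cscSubPoles_pi_sub (x : ℝ) : cscSubPoles (π - x) = cscSubPoles x := by
  simp only [cscSubPoles, sin_pi_sub, sub_sub_cancel]
  ring

lemma continuousOn_cscSubPoles : ContinuousOn cscSubPoles (Icc 0 π) := by
  have h_zero : Tendsto cscSubPoles (𝓝[>] 0) (𝓝 (cscSubPoles 0)) := by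
    have h : Tendsto (fun x => 1 / (π - x)) (𝓝[>] 0) (𝓝 (1 / (π - 0))) :=
      tendsto_nhdsWithin_of_tendsto_nhds <|
        tendsto_const_nhds.div ((continuous_sub_left π).tendsto 0) (by simp [pi_ne_zero])
    have h0 : cscSubPoles 0 = 0 - 1 / (π - 0) := by simp [cscSubPoles]
    rw [h0]
    exact tendsto_one_div_sin_sub_one_div.sub h
  have h_pi : Tendsto cscSubPoles (𝓝[<] π) (𝓝 (cscSubPoles π)) := by
    have hπ : cscSubPoles π = cscSubPoles 0 := by simpa using cscSubPoles_pi_sub 0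
    rw [hπ]
    exact (h_zero.comp (tendsto_const_sub_nhdsLT π)).congr cscSubPoles_pi_sub
  intro x hx
  rcases hx.1.eq_or_lt with rfl | hx₀
  · exact (continuousWithinAt_Ioi_iff_Ici.1 h_zero).mono Icc_subset_Ici_self
  rcases hx.2.eq_or_lt with rfl | hxπ
  · exact (continuousWithinAt_Iio_iff_Iic.1 h_pi).mono Icc_subset_Iic_self
  have hsin : sin x ≠ 0 := (sin_pos_of_pos_of_lt_pi hx₀ hxπ).ne'
  have hπx : π - x ≠ 0 := (sub_pos.2 hxπ).ne'
  exact ContinuousAt.continuousWithinAt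
    (by unfold cscSubPoles; fun_prop (disch := first | assumption | exact hx₀.ne'))

lemma hasDerivAt_log_tan_half {x : ℝ} (hx : x ∈ Ioo 0 π) :
    HasDerivAt (fun y => log (tan (y / 2))) (1 / sin x) x := by
  have hcos : 0 < cos (x / 2) :=
    cos_pos_of_mem_Ioo ⟨by linarith [hx.1, pi_pos], by linarith [hx.2]⟩
  have hsin : 0 < sin (x / 2) :=
    sin_pos_of_pos_of_lt_pi (by linarith [hx.1]) (by linarith [hx.2, pi_pos])
  have htan : tan (x / 2) ≠ 0 := by rw [tan_eq_sin_div_cos]; positivity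
  have hd := (hasDerivAt_log htan).comp x
    ((hasDerivAt_tan hcos.ne').comp x ((hasDerivAt_id x).div_const 2))
  refine hd.congr_deriv ?_
  have hsin_x : sin x = 2 * sin (x / 2) * cos (x / 2) := by rw [← sin_two_mul]; ring_nf
  rw [tan_eq_sin_div_cos, hsin_x]
  field_simp

noncomputable def cscSubPolesPrimitive (x : ℝ) : ℝ := log (tan (x / 2)) + log (π - x) - log x

lemma hasDerivAt_cscSubPolesPrimitive {x : ℝ} (hx : x ∈ Ioo 0 π) :
    HasDerivAt cscSubPolesPrimitive (cscSubPoles x) x := by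
  have hπx : π - x ≠ 0 := (sub_pos.2 hx.2).ne'
  refine (((hasDerivAt_log_tan_half hx).add
    ((hasDerivAt_log hπx).comp x ((hasDerivAt_id x).const_sub π))).sub
      (hasDerivAt_log hx.1.ne')).congr_deriv ?_
  simp only [cscSubPoles]
  ring

lemma cscSubPolesPrimitive_pi_sub (x : ℝ) :
    cscSubPolesPrimitive (π - x) = -cscSubPolesPrimitive x := by
  have h : (π - x) / 2 = π / 2 - x / 2 := by ring
  simp only [cscSubPolesPrimitive, sub_sub_cancel, h, tan_pi_div_two_sub, log_inv]
  ring

lemma tendsto_cscSubPolesPrimitive_zero :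
    Tendsto cscSubPolesPrimitive (𝓝[>] 0) (𝓝 (log (π / 2))) := by
  have hprod : Tendsto (fun x => tan (x / 2) / x * (π - x)) (𝓝[>] 0) (𝓝 (1 / 2 * (π - 0))) :=
    (tendsto_tan_half_div_self.mono_left (nhdsGT_le_nhdsNE 0)).mul
      (tendsto_nhdsWithin_of_tendsto_nhds ((continuous_sub_left π).tendsto 0))
  rw [show 1 / 2 * (π - 0) = π / 2 by ring] at hprod
  refine ((continuousAt_log (by positivity)).tendsto.comp hprod).congr' ?_
  filter_upwards [Ioo_mem_nhdsGT pi_pos] with x hx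
  have htan : 0 < tan (x / 2) :=
    tan_pos_of_pos_of_lt_pi_div_two (by linarith [hx.1]) (by linarith [hx.2])
  rw [Function.comp_apply, log_mul (div_pos htan hx.1).ne' (sub_pos.2 hx.2).ne',
    log_div htan.ne' hx.1.ne', cscSubPolesPrimitive]
  ring

lemma integral_cscSubPoles : ∫ x in 0..π, cscSubPoles x = 2 * log (2 / π) := by
  have h_pi : Tendsto cscSubPolesPrimitive (𝓝[<] π) (𝓝 (-log (π / 2))) :=
    (tendsto_cscSubPolesPrimitive_zero.comp (tendsto_const_sub_nhdsLT π)).neg.congr fun x => by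
      simp [cscSubPolesPrimitive_pi_sub]
  rw [intervalIntegral.integral_eq_sub_of_hasDerivAt_of_tendsto pi_pos
    (fun x hx => hasDerivAt_cscSubPolesPrimitive hx)
    (continuousOn_cscSubPoles.intervalIntegrable_of_Icc pi_pos.le)
    tendsto_cscSubPolesPrimitive_zero h_pi, log_div two_ne_zero pi_ne_zero,
    log_div pi_ne_zero two_ne_zero]
  ring

lemma sum_comp_pi_sub_nodes (g : ℝ → ℝ) (n : ℕ) :
    ∑ ℓ ∈ Finset.Icc 1 (n - 1), g (π - π * ℓ / n) =
      ∑ ℓ ∈ Finset.Icc 1 (n - 1), g (π * ℓ / n) := by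
  refine Finset.sum_nbij' (n - ·) (n - ·) ?_ ?_ ?_ ?_ ?_ <;> simp only [Finset.mem_Icc]
  · omega
  · omega
  · omega
  · omega
  · intro ℓ hℓ
    have hn : (n : ℝ) ≠ 0 := by norm_cast; omega
    rw [Nat.cast_sub (by omega)]
    field_simp

lemma sum_one_div_nodes_eq_harmonic (n : ℕ) :
    ∑ ℓ ∈ Finset.Icc 1 (n - 1), 1 / (π * ℓ / n) = n / π * harmonic (n - 1) := by
  rw [harmonic_eq_sum_Icc, Rat.cast_sum, Finset.mul_sum]
  refine Finset.sum_congr rfl fun ℓ hℓ => ?_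
  have hℓ : (ℓ : ℝ) ≠ 0 := by have := (Finset.mem_Icc.1 hℓ).1; norm_cast; omega
  push_cast
  field_simp

lemma G_eq_mean_cscSubPoles_add_harmonic (n : ℕ) :
    G n = 1 / n * ∑ ℓ ∈ Finset.Icc 1 (n - 1), cscSubPoles (π * ℓ / n) +
      2 / π * harmonic (n - 1) := by
  rcases eq_or_ne n 0 with rfl | hn
  · simp [G]
  have hcsc : ∀ x, 1 / sin x = cscSubPoles x + 1 / x + 1 / (π - x) := fun x => by
    rw [cscSubPoles]; ring
  simp only [G, hcsc, Finset.sum_add_distrib, sum_comp_pi_sub_nodes (fun x => 1 / x),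
    sum_one_div_nodes_eq_harmonic]
  field_simp
  ring

lemma tendsto_mean_cscSubPoles :
    Tendsto (fun n : ℕ => 1 / n * ∑ ℓ ∈ Finset.Icc 1 (n - 1), cscSubPoles (π * ℓ / n)) atTop
      (𝓝 (2 / π * log (2 / π))) := by
  have h := ((tendsto_leftRiemannSum pi_pos.le continuousOn_cscSubPoles).const_mul (1 / π)).sub
    (tendsto_one_div_atTop_nhds_zero_nat.const_mul (cscSubPoles 0))
  rw [integral_cscSubPoles, mul_zero, sub_zero, ← mul_assoc, one_div_mul_eq_div] at h
  refine h.congr' ?_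
  filter_upwards [eventually_ne_atTop 0] with n hn
  have hIcc : Finset.Icc 1 (n - 1) = Finset.Ico 1 n := by ext; simp; omega
  rw [leftRiemannSum, Finset.range_eq_Ico,
    Finset.sum_eq_sum_Ico_succ_bot (Nat.pos_of_ne_zero hn), hIcc]
  have hnode : ∀ k : ℕ, (k : ℝ) * (π / n) = π * k / n := fun k => by ring
  simp only [sub_zero, zero_add, hnode]
  field_simp
  simp

lemma tendsto_harmonic_pred_sub_log :
    Tendsto (fun n : ℕ => (harmonic (n - 1) : ℝ) - log n) atTop (𝓝 eulerMascheroniConstant) := by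
  refine (tendsto_harmonic_sub_log_add_one.comp (tendsto_sub_atTop_nat 1)).congr' ?_
  filter_upwards [eventually_ge_atTop 1] with n hn
  simp [Nat.cast_sub hn]

theorem G_asymptotic :
    Tendsto (fun n : ℕ =>
        G n - (2 / π) * (Real.log n + Real.eulerMascheroniConstant + Real.log (2 / π)))
      atTop (nhds 0) := by
  have h := (tendsto_mean_cscSubPoles.sub_const (2 / π * log (2 / π))).add
    ((tendsto_harmonic_pred_sub_log.sub_const eulerMascheroniConstant).const_mul (2 / π))
  rw [sub_self, sub_self, mul_zero, add_zero] at h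
  refine h.congr fun n => ?_
  rw [G_eq_mean_cscSubPoles_add_harmonic]
  ring
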